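/- Proposition C.1 (sharp identification in GLM*): Fix an agent i ∈ 𝒜 and a vector v ∈ Δ(X). There exist, for each N ∈ 𝒩_i, reals π_i^N(j) ≥ 0 (j ∈ N) with Σ_{j∈N} π_i^N(j) = 1 such that p_i^N = π_i^N(i)·v + Σ_{j∈N∖{i}} π_i^N(j)·p_j^N for every N ∈ 𝒩_i, if and only if v ∈ ⋂_{N∈𝒩_i^{ext}} co⁻¹(Δ(p^N), p_i^N) (where, if 𝒩_i^{ext} = ∅, every v ∈ Δ(X) qualifies). Equivalently, the sharp identified set for v_i in GLM* equals ⋂_{N∈𝒩_i^{ext}} co⁻¹(Δ(p^N), p_i^N). -/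

import Mathlib

open Finset
open scoped Classical

noncomputable section

/-- The simplex Δ(X) of probability vectors on a finite set X. -/
def simplex (X : Type*) [Fintype X] : Set (X → ℝ) :=
  {v | (∀ x, 0 ≤ v x) ∧ (∑ x, v x) = 1}

/-- The inverse cone co⁻¹(Δ(p^N), p_i^N). -/
def invCone {X A : Type*} [Fintype X] [DecidableEq A]
    (p : Finset A → A → X → ℝ) (N : Finset A) (i : A) : Set (X → ℝ) :=
  {v | v ∈ simplex X ∧ ∃ γ : A → ℝ, (∀ j ∈ N.erase i, γ j ≤ 0) ∧
    (∑ j ∈ N, γ j) = 1 ∧ v = ∑ j ∈ N, γ j • p N j}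

/-- 𝒩_i^{ext}: the groups containing i in which agent i's choice is not in the convex
hull of the other agents' choices. -/
def Next {X A : Type*} [Fintype X] [DecidableEq A]
    (𝒩 : Finset (Finset A)) (p : Finset A → A → X → ℝ) (i : A) : Finset (Finset A) :=
  𝒩.filter (fun N => i ∈ N ∧ p N i ∉ convexHull ℝ (p N '' ↑(N.erase i)))

/-!
In a group `N ∋ i`, the relation `p_i = π_i v + ∑_{j ≠ i} π_j p_j` with `π_i ≠ 0` can be
solved for `v`, which gives `v` as an affine combination of the `p_j` with weight `1 / π_i` on `i`
and `-π_j / π_i` on `j ≠ i`; the same pivoting turns such an affine combination back into a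
mixture. Nonnegative `π` with `π_i > 0` correspond exactly to affine weights that are nonpositive
off `i`, i.e. to `v ∈ co⁻¹(Δ(p^N), p_i^N)`. When `p_i` lies in the convex hull of the others, the
mixture with `π_i = 0` works for every `v`, so no condition comes from `N`; otherwise `π_i = 0` is
impossible and the condition is exactly membership in the inverse cone.
-/

section ConvexHull

variable {𝕜 E ι : Type*} [Field 𝕜] [LinearOrder 𝕜] [IsStrictOrderedRing 𝕜]
  [AddCommGroup E] [Module 𝕜 E]

theorem mem_convexHull_image_iff_exists_sum_smul {s : Finset ι} {q : ι → E}
    {x : E} :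
    x ∈ convexHull 𝕜 (q '' ↑s) ↔
      ∃ w : ι → 𝕜, (∀ j ∈ s, 0 ≤ w j) ∧ ∑ j ∈ s, w j = 1 ∧ ∑ j ∈ s, w j • q j = x := by
  constructor
  · intro hx
    suffices convexHull 𝕜 (q '' ↑s) ⊆
        {y | ∃ w : ι → 𝕜, (∀ j ∈ s, 0 ≤ w j) ∧ ∑ j ∈ s, w j = 1 ∧ ∑ j ∈ s, w j • q j = y} from
      this hx
    refine convexHull_min ?_ ?_
    · rintro _ ⟨j, hj : j ∈ s, rfl⟩
      refine ⟨fun k => if k = j then 1 else 0, fun k _ => ?_, ?_, ?_⟩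
      · dsimp only
        split_ifs <;> norm_num
      · simp [hj]
      · simp [ite_smul, hj]
    · rintro _ ⟨w, hw₀, hw₁, rfl⟩ _ ⟨w', hw₀', hw₁', rfl⟩ a b ha hb hab
      refine ⟨a • w + b • w', fun j hj => ?_, ?_, ?_⟩
      · simp only [Pi.add_apply, Pi.smul_apply, smul_eq_mul]
        exact add_nonneg (mul_nonneg ha (hw₀ j hj)) (mul_nonneg hb (hw₀' j hj))
      · simp [sum_add_distrib, ← mul_sum, hw₁, hw₁', hab]
      · simp [add_smul, mul_smul, sum_add_distrib, ← smul_sum]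
  · rintro ⟨w, hw₀, hw₁, rfl⟩
    rw [← centerMass_eq_of_sum_1 _ _ hw₁]
    exact s.centerMass_mem_convexHull hw₀ (by rw [hw₁]; exact one_pos)
      fun j hj => Set.mem_image_of_mem q hj

end ConvexHull

section Pivot

variable {𝕜 E ι : Type*} [Field 𝕜] [AddCommGroup E] [Module 𝕜 E] [DecidableEq ι]

/-- The weights obtained by solving `u = w i • t + ∑ j ≠ i, w j • q j` for `t`. -/
def pivotWeights (w : ι → 𝕜) (i : ι) : ι → 𝕜 :=
  Function.update (fun j => -w j / w i) i (w i)⁻¹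

variable {w : ι → 𝕜} {i j : ι}

theorem pivotWeights_self : pivotWeights w i i = (w i)⁻¹ :=
  Function.update_self _ _ _

theorem pivotWeights_of_ne (h : j ≠ i) : pivotWeights w i j = -w j / w i :=
  Function.update_of_ne h _ _

theorem sum_pivotWeights {s : Finset ι} (hi : i ∈ s) (hw : ∑ j ∈ s, w j = 1) (hwi : w i ≠ 0) :
    ∑ j ∈ s, pivotWeights w i j = 1 := by
  have hrest : ∑ j ∈ s.erase i, w j = 1 - w i := by
    rw [← hw, ← add_sum_erase s w hi, add_sub_cancel_left]
  rw [← add_sum_erase _ _ hi, pivotWeights_self,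
    sum_congr rfl fun j hj => pivotWeights_of_ne (ne_of_mem_erase hj),
    ← sum_div, sum_neg_distrib, hrest]
  field_simp
  ring

theorem eq_smul_add_sum_pivotWeights {s : Finset ι} {q : ι → E} {u t : E} (hwi : w i ≠ 0)
    (h : u = w i • t + ∑ j ∈ s.erase i, w j • q j) :
    t = pivotWeights w i i • u + ∑ j ∈ s.erase i, pivotWeights w i j • q j := by
  rw [sum_congr rfl fun j hj => by rw [pivotWeights_of_ne (ne_of_mem_erase hj)],
    pivotWeights_self, h, smul_add, smul_smul, inv_mul_cancel₀ hwi, one_smul, smul_sum,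
    add_assoc, ← sum_add_distrib]
  conv_lhs => rw [← add_zero t]
  congr 1
  refine (sum_eq_zero fun j _ => ?_).symm
  rw [smul_smul, ← add_smul, neg_div, inv_mul_eq_div, add_neg_cancel, zero_smul]

end Pivot

section Mixture

variable {𝕜 E ι : Type*} [Field 𝕜] [LinearOrder 𝕜] [IsStrictOrderedRing 𝕜]
  [AddCommGroup E] [Module 𝕜 E] [DecidableEq ι] {s : Finset ι} {q : ι → E} {i : ι}

theorem exists_mixture_of_mem_convexHull (hi : i ∈ s)
    (hq : q i ∈ convexHull 𝕜 (q '' ↑(s.erase i))) (v : E) :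
    ∃ π : ι → 𝕜, (∀ j ∈ s, 0 ≤ π j) ∧ ∑ j ∈ s, π j = 1 ∧
      q i = π i • v + ∑ j ∈ s.erase i, π j • q j := by
  obtain ⟨w, hw₀, hw₁, hwq⟩ := mem_convexHull_image_iff_exists_sum_smul.mp hq
  refine ⟨Function.update w i 0, fun j hj => ?_, ?_, ?_⟩
  · rcases eq_or_ne j i with rfl | hji
    · simp
    · rw [Function.update_of_ne hji]
      exact hw₀ j (mem_erase.mpr ⟨hji, hj⟩)
  · rw [← add_sum_erase _ _ hi, Function.update_self, zero_add, ← hw₁]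
    exact sum_congr rfl fun j hj => Function.update_of_ne (ne_of_mem_erase hj) _ _
  · rw [Function.update_self, zero_smul, zero_add, ← hwq]
    exact sum_congr rfl fun j hj => by rw [Function.update_of_ne (ne_of_mem_erase hj)]

theorem exists_mixture_iff_of_notMem_convexHull (hi : i ∈ s)
    (hq : q i ∉ convexHull 𝕜 (q '' ↑(s.erase i))) (v : E) :
    (∃ π : ι → 𝕜, (∀ j ∈ s, 0 ≤ π j) ∧ ∑ j ∈ s, π j = 1 ∧
        q i = π i • v + ∑ j ∈ s.erase i, π j • q j) ↔
      ∃ γ : ι → 𝕜, (∀ j ∈ s.erase i, γ j ≤ 0) ∧ ∑ j ∈ s, γ j = 1 ∧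
        v = ∑ j ∈ s, γ j • q j := by
  constructor
  · rintro ⟨π, hπ₀, hπ₁, hπq⟩
    have hπi : 0 < π i := by
      refine (hπ₀ i hi).lt_of_ne fun h0 => hq ?_
      refine mem_convexHull_image_iff_exists_sum_smul.mpr
        ⟨π, fun j hj => hπ₀ j (mem_of_mem_erase hj), ?_, ?_⟩
      · rw [← hπ₁, ← add_sum_erase _ _ hi, ← h0, zero_add]
      · rw [hπq, ← h0, zero_smul, zero_add]
    refine ⟨pivotWeights π i, fun j hj => ?_, sum_pivotWeights hi hπ₁ hπi.ne', ?_⟩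
    · rw [pivotWeights_of_ne (ne_of_mem_erase hj)]
      exact div_nonpos_of_nonpos_of_nonneg (neg_nonpos.mpr (hπ₀ j (mem_of_mem_erase hj))) hπi.le
    · rw [← add_sum_erase _ _ hi]
      exact eq_smul_add_sum_pivotWeights hπi.ne' hπq
  · rintro ⟨γ, hγ₀, hγ₁, hγv⟩
    have hγi : 0 < γ i := by
      have hrest : ∑ j ∈ s.erase i, γ j ≤ 0 := sum_nonpos hγ₀
      rw [← add_sum_erase _ _ hi] at hγ₁
      linarith
    refine ⟨pivotWeights γ i, fun j hj => ?_, sum_pivotWeights hi hγ₁ hγi.ne', ?_⟩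
    · rcases eq_or_ne j i with rfl | hji
      · exact pivotWeights_self (w := γ) ▸ inv_nonneg.mpr hγi.le
      · rw [pivotWeights_of_ne hji]
        exact div_nonneg (neg_nonneg.mpr (hγ₀ j (mem_erase.mpr ⟨hji, hj⟩))) hγi.le
    · rw [← add_sum_erase _ _ hi] at hγv
      exact eq_smul_add_sum_pivotWeights hγi.ne' hγv

theorem exists_mixture_iff (hi : i ∈ s) (v : E) :
    (∃ π : ι → 𝕜, (∀ j ∈ s, 0 ≤ π j) ∧ ∑ j ∈ s, π j = 1 ∧
        q i = π i • v + ∑ j ∈ s.erase i, π j • q j) ↔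
      (q i ∉ convexHull 𝕜 (q '' ↑(s.erase i)) →
        ∃ γ : ι → 𝕜, (∀ j ∈ s.erase i, γ j ≤ 0) ∧ ∑ j ∈ s, γ j = 1 ∧
          v = ∑ j ∈ s, γ j • q j) := by
  by_cases hq : q i ∈ convexHull 𝕜 (q '' ↑(s.erase i))
  · exact iff_of_true (exists_mixture_of_mem_convexHull hi hq v) fun h => (h hq).elim
  · rw [exists_mixture_iff_of_notMem_convexHull hi hq]
    exact ⟨fun h _ => h, fun h => h hq⟩

end Mixture

theorem glmstar_sharp_identification_general
    {X A : Type*} [Fintype X] [DecidableEq A]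
    (𝒩 : Finset (Finset A))
    (p : Finset A → A → X → ℝ)
    (i : A) (v : X → ℝ) (hv : v ∈ simplex X) :
    (∀ N ∈ 𝒩.filter (fun N => i ∈ N), ∃ π : A → ℝ,
        (∀ j ∈ N, 0 ≤ π j) ∧ (∑ j ∈ N, π j) = 1 ∧
        p N i = π i • v + ∑ j ∈ N.erase i, π j • p N j) ↔
      v ∈ ⋂ N ∈ Next 𝒩 p i, invCone p N i := by
  simp only [Set.mem_iInter, invCone, Next, mem_filter, Set.mem_ofPred_eq, hv, true_and, and_imp]
  exact forall_congr' fun N => forall_congr' fun _ => forall_congr' fun hiN =>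
    exists_mixture_iff hiN v

/-- Proposition C.1: the sharp identified set for agent i's ideal point in GLM* is
⋂_{N ∈ 𝒩_i^{ext}} co⁻¹(Δ(p^N), p_i^N). -/
theorem glmstar_sharp_identification
    {X A : Type*} [Fintype X] [Fintype A] [DecidableEq A]
    (hX : 2 ≤ Fintype.card X) (hA : 2 ≤ Fintype.card A)
    (𝒩 : Finset (Finset A)) (h𝒩 : 𝒩.Nonempty) (h𝒩' : ∀ N ∈ 𝒩, N.Nonempty)
    (p : Finset A → A → X → ℝ) (hp : ∀ N ∈ 𝒩, ∀ i ∈ N, p N i ∈ simplex X)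
    (i : A) (v : X → ℝ) (hv : v ∈ simplex X) :
    (∀ N ∈ 𝒩.filter (fun N => i ∈ N), ∃ π : A → ℝ,
        (∀ j ∈ N, 0 ≤ π j) ∧ (∑ j ∈ N, π j) = 1 ∧
        p N i = π i • v + ∑ j ∈ N.erase i, π j • p N j) ↔
      v ∈ ⋂ N ∈ Next 𝒩 p i, invCone p N i :=
  glmstar_sharp_identification_general 𝒩 p i v hv
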